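/- Let F₁(r) = P(χ²_k ≥ r τ_λ²) and F₂(r) = P(k F_{k,λ} ≥ r), where χ²_k is Chi-squared with k degrees of freedom, F_{k,λ} is an F random variable with (k, λ) degrees of freedom, and τ_λ² = (2/λ) Γ^{2/k}((k+λ)/2)/Γ^{2/k}(λ/2). Then F₂(r) ≥ F₁(r) for all r ≥ 0, i.e., the scaled chi-square tail is dominated by the scaled F tail. -/

import Mathlib

/-!
Substituting `u ↦ τ² u` turns the `χ²_k` tail at `r τ²` into the tail at `r` of the
`Gamma(k/2, τ²/2)` density `φ`, and `τ²` is exactly the rate for which `φ` and the density `ψ`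
of `k F_{k,λ}` share their normalising constant. Hence `ψ = φ · exp D` on `(0, ∞)` with
`D u = τ² u / 2 - (k + λ) / 2 · log (1 + u / λ)`, and `D u / u` is increasing since
`log (1 + x) / x` decreases (concavity of `log`). So `D` changes sign at most once, from negative
to positive: either `φ ≤ ψ` beyond `r`, or `ψ ≤ φ` on `(0, r]`, and in the second case the tails
compare because both densities have total mass one.
-/

open MeasureTheory Real Set

noncomputable def chiPdf (k : ℕ) (u : ℝ) : ℝ :=
  if 0 < u then u ^ ((k : ℝ) / 2 - 1) * Real.exp (-u / 2) /
    (2 ^ ((k : ℝ) / 2) * Real.Gamma ((k : ℝ) / 2)) else 0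

/-- Density of `k·F_{k,λ}`. -/
noncomputable def kFPdf (k : ℕ) (l u : ℝ) : ℝ :=
  if 0 < u then
    (Real.Gamma (((k : ℝ) + l) / 2) / (Real.Gamma ((k : ℝ) / 2) * Real.Gamma (l / 2))) *
      l ^ (-((k : ℝ) / 2)) * u ^ ((k : ℝ) / 2 - 1) * (1 + u / l) ^ (-(((k : ℝ) + l) / 2))
  else 0

/-- `τ_λ² = (2/λ) Γ^{2/k}((k+λ)/2)/Γ^{2/k}(λ/2)`. -/
noncomputable def tauSq (k : ℕ) (l : ℝ) : ℝ :=
  (2 / l) * Real.Gamma (((k : ℝ) + l) / 2) ^ (2 / (k : ℝ)) /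
    Real.Gamma (l / 2) ^ (2 / (k : ℝ))

open ProbabilityTheory

theorem integrable_and_integral_eq_one_of_lintegral_eq_one {α : Type*} [MeasurableSpace α]
    {μ : Measure α} {f : α → ℝ} (hf : AEStronglyMeasurable f μ) (hf0 : 0 ≤ᵐ[μ] f)
    (h : ∫⁻ x, ENNReal.ofReal (f x) ∂μ = 1) : Integrable f μ ∧ ∫ x, f x ∂μ = 1 :=
  ⟨⟨hf, (hasFiniteIntegral_iff_ofReal hf0).2 (by simp [h])⟩,
    by rw [integral_eq_lintegral_of_nonneg_ae hf0 hf, h, ENNReal.toReal_one]⟩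

theorem integrable_and_integral_gammaPDFReal {a r : ℝ} (ha : 0 < a) (hr : 0 < r) :
    Integrable (gammaPDFReal a r) ∧ ∫ x, gammaPDFReal a r x = 1 :=
  integrable_and_integral_eq_one_of_lintegral_eq_one
    (measurable_gammaPDFReal a r).aestronglyMeasurable
    (ae_of_all _ (gammaPDFReal_nonneg ha hr)) (lintegral_gammaPDF_eq_one ha hr)

theorem setIntegral_gammaPDFReal_Ioi {a r : ℝ} (ha : 0 < a) (hr : 0 < r) :
    ∫ u in Ioi 0, gammaPDFReal a r u = 1 := by
  rw [← integral_Ici_eq_integral_Ioi, setIntegral_eq_integral_of_forall_compl_eq_zero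
    (f := gammaPDFReal a r) (s := Ici 0) fun u (hu : ¬ 0 ≤ u) => if_neg hu]
  exact (integrable_and_integral_gammaPDFReal ha hr).2

theorem integrable_and_integral_betaPDFReal {α β : ℝ} (hα : 0 < α) (hβ : 0 < β) :
    Integrable (betaPDFReal α β) ∧ ∫ x, betaPDFReal α β x = 1 :=
  integrable_and_integral_eq_one_of_lintegral_eq_one
    (measurable_betaPDFReal α β).aestronglyMeasurable
    (ae_of_all _ fun x => show 0 ≤ betaPDFReal α β x by
      by_cases hx : 0 < x ∧ x < 1
      · exact (betaPDFReal_pos hx.1 hx.2 hα hβ).le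
      · rw [betaPDFReal, if_neg hx])
    (lintegral_betaPDF_eq_one hα hβ)

theorem antitoneOn_log_one_add_div_self : AntitoneOn (fun x : ℝ => log (1 + x) / x) (Ioi 0) := by
  intro x (hx : 0 < x) y (hy : 0 < y) hxy
  have hmem : ∀ z : ℝ, 0 < z → 1 + z ∈ Ioi (0 : ℝ) \ {1} := fun z hz =>
    ⟨show (0 : ℝ) < 1 + z by linarith, by simpa using hz.ne'⟩
  simpa [slope_def_field] using
    strictConcaveOn_log_Ioi.concaveOn.slope_anti (x := 1) (mem_Ioi.2 one_pos) (hmem x hx)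
      (hmem y hy) (by linarith)

theorem monotoneOn_sub_mul_log_one_add_div_div {s c l : ℝ} (hc : 0 ≤ c) (hl : 0 < l) :
    MonotoneOn (fun u => (s * u - c * log (1 + u / l)) / u) (Ioi 0) := by
  intro u (hu : 0 < u) v (hv : 0 < v) huv
  have hslope : ∀ {w : ℝ}, 0 < w →
      (s * w - c * log (1 + w / l)) / w = s - c / l * (log (1 + w / l) / (w / l)) := fun hw => by
    field_simp
  simp only [hslope hu, hslope hv]
  have hlog := antitoneOn_log_one_add_div_self (div_pos hu hl) (div_pos hv hl)
    (div_le_div_of_nonneg_right huv hl.le)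
  have hcl : 0 ≤ c / l := div_nonneg hc hl.le
  gcongr

theorem nonneg_on_Ioi_or_nonpos_on_Ioc_of_monotoneOn_div {D : ℝ → ℝ}
    (hD : MonotoneOn (fun u => D u / u) (Ioi 0)) (r : ℝ) :
    (∀ u ∈ Ioi r, 0 ≤ D u) ∨ ∀ u ∈ Ioc 0 r, D u ≤ 0 := by
  by_contra! h
  obtain ⟨⟨v, hrv, hDv⟩, ⟨w, ⟨hw, hwr⟩, hDw⟩⟩ := h
  have hwv : w ≤ v := hwr.trans hrv.le
  have hv : 0 < v := hw.trans_le hwv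
  linarith [hD hw hv hwv, div_neg_of_neg_of_pos hDv hv, div_pos hDw hw]

theorem setIntegral_Ioi_le_of_eq_mul_exp {p q D : ℝ → ℝ} (hp : IntegrableOn p (Ioi 0))
    (hq : IntegrableOn q (Ioi 0)) (hmass : ∫ u in Ioi 0, p u = ∫ u in Ioi 0, q u)
    (hp0 : ∀ u ∈ Ioi 0, 0 ≤ p u) (hpq : ∀ u ∈ Ioi 0, q u = p u * exp (D u))
    (hD : MonotoneOn (fun u => D u / u) (Ioi 0)) {r : ℝ} (hr : 0 ≤ r) :
    ∫ u in Ioi r, p u ≤ ∫ u in Ioi r, q u := by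
  have hsub : Ioi r ⊆ Ioi 0 := Ioi_subset_Ioi hr
  rcases nonneg_on_Ioi_or_nonpos_on_Ioc_of_monotoneOn_div hD r with hDr | hDr
  · refine setIntegral_mono_on (hp.mono_set hsub) (hq.mono_set hsub) measurableSet_Ioi
      fun u hu => ?_
    rw [hpq u (hsub hu)]
    exact le_mul_of_one_le_right (hp0 u (hsub hu)) (one_le_exp (hDr u hu))
  · have hhead : ∫ u in Ioc 0 r, q u ≤ ∫ u in Ioc 0 r, p u := by
      refine setIntegral_mono_on (hq.mono_set Ioc_subset_Ioi_self)
        (hp.mono_set Ioc_subset_Ioi_self) measurableSet_Ioc fun u hu => ?_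
      rw [hpq u hu.1]
      exact mul_le_of_le_one_right (hp0 u hu.1) (exp_le_one_iff.2 (hDr u hu))
    have hsplit : ∀ f : ℝ → ℝ, IntegrableOn f (Ioi 0) →
        ∫ u in Ioi 0, f u = (∫ u in Ioc 0 r, f u) + ∫ u in Ioi r, f u := fun f hf => by
      rw [← setIntegral_union (Ioc_disjoint_Ioi le_rfl) measurableSet_Ioi
        (hf.mono_set Ioc_subset_Ioi_self) (hf.mono_set hsub), Ioc_union_Ioi_eq_Ioi hr]
    linarith [hsplit p hp, hsplit q hq]

section BetaPrime

variable {l : ℝ}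

theorem hasDerivAt_div_add_const {u : ℝ} (h : u + l ≠ 0) :
    HasDerivAt (fun v => v / (v + l)) (l / (u + l) ^ 2) u :=
  ((hasDerivAt_id' u).fun_div ((hasDerivAt_id' u).add_const l) h).congr_deriv (by ring)

theorem strictMonoOn_div_add_const (hl : 0 < l) :
    StrictMonoOn (fun v => v / (v + l)) (Ioi 0) := fun u (hu : 0 < u) v (hv : 0 < v) huv => by
  show u / (u + l) < v / (v + l)
  rw [div_lt_div_iff₀ (by linarith) (by linarith)]
  nlinarith

theorem image_div_add_const_Ioi (hl : 0 < l) : (fun v => v / (v + l)) '' Ioi 0 = Ioo 0 1 := by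
  ext t
  constructor
  · rintro ⟨u, hu, rfl⟩
    have hu : 0 < u := hu
    exact ⟨by positivity, (div_lt_one (by linarith)).2 (by linarith)⟩
  · rintro ⟨ht0, ht1⟩
    have h1t : 0 < 1 - t := by linarith
    refine ⟨l * t / (1 - t), show 0 < l * t / (1 - t) by positivity, ?_⟩
    field_simp
    ring

theorem abs_deriv_smul_betaPDFReal (k : ℕ) (hl : 0 < l) {u : ℝ} (hu : 0 < u) :
    |l / (u + l) ^ 2| • betaPDFReal ((k : ℝ) / 2) (l / 2) (u / (u + l)) = kFPdf k l u := by
  have hw : 0 < u + l := by linarith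
  have ht : u / (u + l) ∈ Ioo 0 1 := image_div_add_const_Ioi hl ▸ mem_image_of_mem _ hu
  have h1t : 1 - u / (u + l) = l / (u + l) := by field_simp; ring
  have h1ul : 1 + u / l = (u + l) / l := by field_simp; ring
  rw [betaPDFReal, if_pos (show _ ∧ _ from ht), kFPdf, if_pos hu, beta, h1t, h1ul, smul_eq_mul,
    abs_of_pos (by positivity), add_div (k : ℝ)]
  simp only [div_rpow hu.le hw.le, div_rpow hl.le hw.le, div_rpow hw.le hl.le,
    rpow_sub_one hu.ne', rpow_sub_one hl.ne', rpow_sub_one hw.ne', rpow_neg hl.le,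
    rpow_neg hw.le, rpow_add hl, rpow_add hw]
  field_simp

theorem integrableOn_kFPdf {k : ℕ} (hk : 0 < k) (hl : 0 < l) :
    IntegrableOn (kFPdf k l) (Ioi 0) := by
  have hbeta := (integrable_and_integral_betaPDFReal (α := (k : ℝ) / 2) (β := l / 2)
    (by positivity) (by positivity)).1
  have hsubst := integrableOn_image_iff_integrableOn_abs_deriv_smul measurableSet_Ioi
    (fun u (hu : 0 < u) => (hasDerivAt_div_add_const (by linarith)).hasDerivWithinAt)
    (strictMonoOn_div_add_const hl).injOn (betaPDFReal ((k : ℝ) / 2) (l / 2))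
  rw [image_div_add_const_Ioi hl] at hsubst
  exact (hsubst.1 hbeta.integrableOn).congr_fun
    (fun u hu => abs_deriv_smul_betaPDFReal k hl hu) measurableSet_Ioi

theorem setIntegral_kFPdf_Ioi {k : ℕ} (hk : 0 < k) (hl : 0 < l) :
    ∫ u in Ioi 0, kFPdf k l u = 1 := by
  rw [← setIntegral_congr_fun measurableSet_Ioi fun u hu => abs_deriv_smul_betaPDFReal k hl hu,
    ← integral_image_eq_integral_abs_deriv_smul measurableSet_Ioi
      (fun u (hu : 0 < u) => (hasDerivAt_div_add_const (by linarith)).hasDerivWithinAt)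
      (strictMonoOn_div_add_const hl).injOn,
    image_div_add_const_Ioi hl, setIntegral_eq_integral_of_forall_compl_eq_zero
      (f := betaPDFReal ((k : ℝ) / 2) (l / 2)) (s := Ioo 0 1) fun t ht => if_neg ht]
  exact (integrable_and_integral_betaPDFReal (by positivity) (by positivity)).2

end BetaPrime

theorem mul_chiPdf_mul {k : ℕ} {τ u : ℝ} (hτ : 0 < τ) (hu : 0 < u) :
    τ * chiPdf k (τ * u) = gammaPDFReal ((k : ℝ) / 2) (τ / 2) u := by
  rw [chiPdf, if_pos (mul_pos hτ hu), gammaPDFReal, if_pos hu.le, mul_rpow hτ.le hu.le,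
    div_rpow hτ.le zero_le_two, rpow_sub_one hτ.ne']
  field_simp

theorem setIntegral_Ici_chiPdf_eq_gammaPDFReal (k : ℕ) {τ r : ℝ} (hτ : 0 < τ) (hr : 0 ≤ r) :
    ∫ u in Ici (r * τ), chiPdf k u = ∫ u in Ioi r, gammaPDFReal ((k : ℝ) / 2) (τ / 2) u := by
  rw [← setIntegral_congr_fun measurableSet_Ioi fun u (hu : r < u) =>
      mul_chiPdf_mul (k := k) hτ (hr.trans_lt hu),
    integral_const_mul, integral_comp_mul_left_Ioi (chiPdf k) r hτ, smul_eq_mul,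
    mul_inv_cancel_left₀ hτ.ne', integral_Ici_eq_integral_Ioi, mul_comm]

theorem tauSq_pos {k : ℕ} {l : ℝ} (hl : 0 < l) : 0 < tauSq k l := by
  have hc := Gamma_pos_of_pos (by positivity : 0 < ((k : ℝ) + l) / 2)
  have hb := Gamma_pos_of_pos (half_pos hl)
  unfold tauSq
  positivity

theorem tauSq_div_two_rpow {k : ℕ} {l : ℝ} (hk : 0 < k) (hl : 0 < l) :
    (tauSq k l / 2) ^ ((k : ℝ) / 2) =
      l ^ (-((k : ℝ) / 2)) * (Gamma (((k : ℝ) + l) / 2) / Gamma (l / 2)) := by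
  have hc := Gamma_pos_of_pos (by positivity : 0 < ((k : ℝ) + l) / 2)
  have hb := Gamma_pos_of_pos (half_pos hl)
  have hk' : (2 / (k : ℝ)) * ((k : ℝ) / 2) = 1 := by field_simp
  have root : ∀ {x : ℝ}, 0 < x → (x ^ (2 / (k : ℝ))) ^ ((k : ℝ) / 2) = x := fun hx => by
    rw [← rpow_mul hx.le, hk', rpow_one]
  rw [tauSq, show ∀ x y : ℝ, 2 / l * x / y / 2 = l⁻¹ * (x / y) by intros; ring,
    mul_rpow (by positivity) (by positivity), div_rpow (by positivity) (by positivity),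
    root hc, root hb, inv_rpow hl.le, rpow_neg hl.le]

theorem kFPdf_eq_gammaPDFReal_mul_exp {k : ℕ} {l u : ℝ} (hk : 0 < k) (hl : 0 < l) (hu : 0 < u) :
    kFPdf k l u = gammaPDFReal ((k : ℝ) / 2) (tauSq k l / 2) u *
      exp (tauSq k l / 2 * u - ((k : ℝ) + l) / 2 * log (1 + u / l)) := by
  rw [kFPdf, if_pos hu, gammaPDFReal, if_pos hu.le, tauSq_div_two_rpow hk hl,
    rpow_def_of_pos (by positivity : (0 : ℝ) < 1 + u / l), mul_assoc _ (exp _), ← exp_add]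
  have hΓ := Gamma_pos_of_pos (half_pos hl)
  field_simp
  ring_nf

/-- With `F₁(r) = P(χ²_k ≥ r τ_λ²)` and `F₂(r) = P(k F_{k,λ} ≥ r)`,
one has `F₁(r) ≤ F₂(r)` for all `r ≥ 0`. -/
theorem stmt18 (k : ℕ) (hk : 0 < k) (l : ℝ) (hl : 0 < l) :
    ∀ r : ℝ, 0 ≤ r →
      (∫ u in Set.Ici (r * tauSq k l), chiPdf k u) ≤ ∫ u in Set.Ici r, kFPdf k l u := by
  intro r hr
  have hτ : 0 < tauSq k l := tauSq_pos hl
  have ha : (0 : ℝ) < k / 2 := by positivity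
  rw [setIntegral_Ici_chiPdf_eq_gammaPDFReal k hτ hr, integral_Ici_eq_integral_Ioi]
  exact setIntegral_Ioi_le_of_eq_mul_exp
    (integrable_and_integral_gammaPDFReal ha (half_pos hτ)).1.integrableOn
    (integrableOn_kFPdf hk hl)
    (by rw [setIntegral_gammaPDFReal_Ioi ha (half_pos hτ), setIntegral_kFPdf_Ioi hk hl])
    (fun u _ => gammaPDFReal_nonneg ha (half_pos hτ) u)
    (fun u hu => kFPdf_eq_gammaPDFReal_mul_exp hk hl hu)
    (monotoneOn_sub_mul_log_one_add_div_div (by positivity) hl) hr
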